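/- arXiv:2110.06198 — 5 statements merged into one kernel-verified Lean document; each statement's English description precedes it below -/
import Mathlib

section
/- Let s ≥ 0 and K ≥ 1 be integers, L ≥ 1 an integer, and x ∈ (0,1]. Define f(x) = x(1-(1-x)^{s+K}) ∏_{j=1}^{L-1} (1 - x/2^j)^K + ∑_{ℓ=1}^{L-1} (x/2^ℓ)(1-(1-x/2^ℓ)^K) ∏_{j=ℓ+1}^{L-1} (1 - x/2^j)^K. Then f(x) ≤ 2(s+K)x². -/
/-! Every factor `(1 - x / 2 ^ j) ^ K` lies in `[0, 1]`, so each summand of the form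
`y (1 - (1 - y) ^ n) P` is at most `n y ^ 2` by Bernoulli's inequality. The leading term thus
contributes at most `(s + K) x ^ 2`, and the `l`-th summand at most `K x ^ 2 / 4 ^ l`, whose
geometric sum is below `K x ^ 2 / 3`. -/

open Finset

section OrderedRing

variable {R : Type*} [CommRing R] [LinearOrder R] [IsStrictOrderedRing R]

lemma one_sub_one_sub_pow_le_mul {y : R} (hy : y ≤ 2) (n : ℕ) : 1 - (1 - y) ^ n ≤ n * y := by
  have := one_add_mul_le_pow (a := -y) (by linarith) n
  rw [← sub_eq_add_neg] at this
  linarith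

lemma one_sub_one_sub_pow_nonneg {y : R} (hy0 : 0 ≤ y) (hy1 : y ≤ 1) (n : ℕ) :
    0 ≤ 1 - (1 - y) ^ n :=
  sub_nonneg.2 (pow_le_one₀ (sub_nonneg.2 hy1) (sub_le_self 1 hy0))

lemma mul_one_sub_one_sub_pow_mul_le {y P : R} (n : ℕ) (hy0 : 0 ≤ y) (hy1 : y ≤ 1)
    (hP : P ∈ Set.Icc 0 1) : y * (1 - (1 - y) ^ n) * P ≤ n * y ^ 2 :=
  calc y * (1 - (1 - y) ^ n) * P ≤ y * (1 - (1 - y) ^ n) :=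
        mul_le_of_le_one_right
          (mul_nonneg hy0 (one_sub_one_sub_pow_nonneg hy0 hy1 n)) hP.2
    _ ≤ y * (n * y) := mul_le_mul_of_nonneg_left (one_sub_one_sub_pow_le_mul (by linarith) n) hy0
    _ = n * y ^ 2 := by ring

lemma prod_one_sub_pow_mem_Icc {ι : Type*} (S : Finset ι) (y : ι → R)
    (hy : ∀ i ∈ S, y i ∈ Set.Icc 0 1) (K : ℕ) : ∏ i ∈ S, (1 - y i) ^ K ∈ Set.Icc 0 1 := by
  have hfac : ∀ i ∈ S, 0 ≤ (1 - y i) ^ K ∧ (1 - y i) ^ K ≤ 1 := fun i hi =>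
    ⟨pow_nonneg (sub_nonneg.2 (hy i hi).2) K,
      pow_le_one₀ (sub_nonneg.2 (hy i hi).2) (sub_le_self 1 (hy i hi).1)⟩
  exact ⟨prod_nonneg fun i hi => (hfac i hi).1,
    prod_le_one (fun i hi => (hfac i hi).1) (fun i hi => (hfac i hi).2)⟩

end OrderedRing

lemma div_two_pow_mem_Icc {x : ℝ} (hx : x ∈ Set.Icc 0 1) (j : ℕ) : x / 2 ^ j ∈ Set.Icc 0 1 :=
  ⟨div_nonneg hx.1 (by positivity), div_le_one_of_le₀ (hx.2.trans (one_le_pow₀ one_le_two))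
    (by positivity)⟩

lemma sum_Icc_quarter_pow_le (n : ℕ) : ∑ l ∈ Icc 1 n, ((1 : ℝ) / 4) ^ l ≤ 1 / 3 := by
  calc ∑ l ∈ Icc 1 n, ((1 : ℝ) / 4) ^ l = ∑ l ∈ Ico 1 (n + 1), ((1 : ℝ) / 4) ^ l :=
        rfl
    _ ≤ (1 / 4) ^ 1 / (1 - 1 / 4) := geom_sum_Ico_le_of_lt_one (by norm_num) (by norm_num)
    _ = 1 / 3 := by norm_num

theorem stmt_3_general (s K L : ℕ) (x : ℝ) (hx0 : 0 < x) (hx1 : x ≤ 1) :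
    x * (1 - (1 - x) ^ (s + K)) * (∏ j ∈ Finset.Icc 1 (L - 1), (1 - x / 2 ^ j) ^ K)
      + ∑ l ∈ Finset.Icc 1 (L - 1),
          (x / 2 ^ l) * (1 - (1 - x / 2 ^ l) ^ K) *
            (∏ j ∈ Finset.Icc (l + 1) (L - 1), (1 - x / 2 ^ j) ^ K)
    ≤ 2 * ((s : ℝ) + K) * x ^ 2 := by
  have hx : x ∈ Set.Icc 0 1 := ⟨hx0.le, hx1⟩
  have hy := div_two_pow_mem_Icc hx
  have hP (S : Finset ℕ) := prod_one_sub_pow_mem_Icc S (fun j => x / 2 ^ j) (fun j _ => hy j) K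
  have hlead := mul_one_sub_one_sub_pow_mul_le (s + K) hx.1 hx.2 (hP (Icc 1 (L - 1)))
  have htail : ∑ l ∈ Icc 1 (L - 1),
      (x / 2 ^ l) * (1 - (1 - x / 2 ^ l) ^ K) *
        (∏ j ∈ Icc (l + 1) (L - 1), (1 - x / 2 ^ j) ^ K) ≤ K * x ^ 2 * (1 / 3) :=
    calc _ ≤ ∑ l ∈ Icc 1 (L - 1), K * x ^ 2 * ((1 : ℝ) / 4) ^ l :=
          sum_le_sum fun l _ => by
            convert mul_one_sub_one_sub_pow_mul_le K (hy l).1 (hy l).2 (hP _) using 1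
            rw [div_pow, div_pow, one_pow, ← pow_mul, mul_comm l, pow_mul]
            ring
      _ = K * x ^ 2 * ∑ l ∈ Icc 1 (L - 1), ((1 : ℝ) / 4) ^ l := (mul_sum ..).symm
      _ ≤ K * x ^ 2 * (1 / 3) := by gcongr; exact sum_Icc_quarter_pow_le _
  push_cast at hlead
  have hslack : 0 ≤ ((s : ℝ) + 2 / 3 * K) * x ^ 2 := by positivity
  linarith

theorem stmt_3 (s K L : ℕ) (hK : 1 ≤ K) (hL : 1 ≤ L) (x : ℝ) (hx0 : 0 < x) (hx1 : x ≤ 1) :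
    x * (1 - (1 - x) ^ (s + K)) * (∏ j ∈ Finset.Icc 1 (L - 1), (1 - x / 2 ^ j) ^ K)
      + ∑ l ∈ Finset.Icc 1 (L - 1),
          (x / 2 ^ l) * (1 - (1 - x / 2 ^ l) ^ K) *
            (∏ j ∈ Finset.Icc (l + 1) (L - 1), (1 - x / 2 ^ j) ^ K)
    ≤ 2 * ((s : ℝ) + K) * x ^ 2 :=
  stmt_3_general s K L x hx0 hx1
end

section
/- Let s ≥ 0 and K ≥ 1 be integers, L = log₂ of the number of decay phases (L ≥ 1 integer), and x ∈ (0,1]. Define f(x) = x(1-(1-x)^{s+K}) ∏_{j=1}^{L-1} (1 - x/2^j)^K + ∑_{ℓ=1}^{L-1} (x/2^ℓ)(1-(1-x/2^ℓ)^K) ∏_{j=ℓ+1}^{L-1} (1 - x/2^j)^K, where 2^L/K ≥ x (so that all stepsize factors x/2^j with j ≥ ⌊log₂(Kx)⌋-1 lie below 2/K within range). Then f(x) ≤ 8/K. -/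
open Finset Real

/-!
Write the kernel as `∑_{l<L} T_l` (`T_l = phaseTerm`), where `T_l ≤ y_l := x / 2^l`, and let
`u` be the first index with `K x ≤ 2^(u+1)`. The phases `l ≥ u` contribute at most
`∑_{l ≥ u} y_l ≤ 2 y_u ≤ 4 / K`. For `l < u` the first later decay factor gives
`T_l ≤ y_l e^{-K y_{l+1}} = (2 / K) v e^{-v}` with `v = K y_{l+1} ≥ 2^(u-1-l) ≥ 1`; as
`v e^{-v}` decreases on `[1, ∞)`, these phases contribute at most
`(2 / K) ∑_m 2^m e^{-2^m} ≤ 2 / K`, the last sum being dominated by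
`∑_n n e^{-n} = e⁻¹ / (1 - e⁻¹)² < 1`.
-/

lemma mul_exp_neg_le_mul_exp_neg {a b : ℝ} (ha : 1 ≤ a) (hab : a ≤ b) :
    b * exp (-b) ≤ a * exp (-a) := by
  have hb : b ≤ a * exp (b - a) := by nlinarith [add_one_le_exp (b - a)]
  calc b * exp (-b) ≤ a * exp (b - a) * exp (-b) := by gcongr
    _ = a * exp (-a) := by rw [mul_assoc, ← exp_add]; ring_nf

lemma sum_natCast_mul_exp_neg_le_one {ι : Type*} (s : Finset ι) (f : ι → ℕ)
    (hf : Set.InjOn f s) : ∑ i ∈ s, (f i : ℝ) * exp (-(f i)) ≤ 1 := by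
  classical
  have hr : exp (-1) < 3 / 8 := by
    rw [exp_neg, inv_lt_comm₀ (exp_pos 1) (by norm_num)]
    linarith [exp_one_gt_d9]
  set r := exp (-1)
  have hr0 : 0 < r := exp_pos _
  have hr1 : ‖r‖ < 1 := by rw [norm_of_nonneg hr0.le]; linarith
  calc ∑ i ∈ s, (f i : ℝ) * exp (-(f i)) = ∑ k ∈ s.image f, (k : ℝ) * r ^ k := by
        rw [sum_image hf]
        refine sum_congr rfl fun i _ => ?_
        rw [← exp_nat_mul, mul_neg_one]
    _ ≤ r / (1 - r) ^ 2 :=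
        sum_le_hasSum _ (fun _ _ => by positivity) (hasSum_coe_mul_geometric_of_norm_lt_one hr1)
    _ ≤ 1 := by rw [div_le_one (by nlinarith)]; nlinarith

lemma exists_min_le_two_pow_succ {a : ℝ} {n : ℕ} (ha : a ≤ 2 ^ (n + 1)) :
    ∃ u ≤ n, a ≤ 2 ^ (u + 1) ∧ ∀ l < u, (2 : ℝ) ^ (l + 1) < a := by
  classical
  have h : ∃ m, a ≤ 2 ^ (m + 1) := ⟨n, ha⟩
  exact ⟨Nat.find h, Nat.find_min' h ha, Nat.find_spec h,
    fun l hl => lt_of_not_ge (Nat.find_min h hl)⟩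

lemma sum_Ico_div_two_pow_le {x : ℝ} (hx : 0 ≤ x) (u n : ℕ) :
    ∑ l ∈ Ico u n, x / 2 ^ l ≤ 2 * (x / 2 ^ u) := by
  calc ∑ l ∈ Ico u n, x / 2 ^ l = x / 2 ^ u * ∑ i ∈ range (n - u), (1 / 2 : ℝ) ^ i := by
        rw [sum_Ico_eq_sum_range, mul_sum]
        refine sum_congr rfl fun i _ => ?_
        rw [pow_add, one_div, inv_pow]; field_simp
    _ ≤ x / 2 ^ u * 2 := by gcongr; exact sum_geometric_two_le _
    _ = 2 * (x / 2 ^ u) := mul_comm _ _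

noncomputable def phaseTerm (e K L : ℕ) (x : ℝ) (l : ℕ) : ℝ :=
  x / 2 ^ l * (1 - (1 - x / 2 ^ l) ^ e) * ∏ j ∈ Icc (l + 1) (L - 1), (1 - x / 2 ^ j) ^ K

section phaseTerm

variable {K L : ℕ} {x : ℝ}

lemma sum_range_phaseTerm (s : ℕ) (hL : 1 ≤ L) :
    ∑ l ∈ range L, phaseTerm (if l = 0 then s + K else K) K L x l =
      x * (1 - (1 - x) ^ (s + K)) * (∏ j ∈ Icc 1 (L - 1), (1 - x / 2 ^ j) ^ K)
        + ∑ l ∈ Icc 1 (L - 1),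
            (x / 2 ^ l) * (1 - (1 - x / 2 ^ l) ^ K) *
              (∏ j ∈ Icc (l + 1) (L - 1), (1 - x / 2 ^ j) ^ K) := by
  have hrange : range L = insert 0 (Icc 1 (L - 1)) := by
    ext i; simp only [mem_range, mem_insert, mem_Icc]; omega
  rw [hrange, sum_insert (by simp)]
  congr 1
  · simp [phaseTerm]
  · refine sum_congr rfl fun l hl => ?_
    rw [if_neg (by simp only [mem_Icc] at hl; omega), phaseTerm]

lemma one_sub_div_two_pow_mem_Icc (hx0 : 0 ≤ x) (hx1 : x ≤ 1) (j : ℕ) :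
    1 - x / 2 ^ j ∈ Set.Icc (0 : ℝ) 1 := by
  have h : x / 2 ^ j ≤ 1 := div_le_one_of_le₀ (hx1.trans (one_le_pow₀ one_le_two)) (by positivity)
  constructor <;> linarith [div_nonneg hx0 (pow_nonneg zero_le_two j)]

lemma prod_one_sub_div_two_pow_mem_Icc (hx0 : 0 ≤ x) (hx1 : x ≤ 1) (s : Finset ℕ) :
    ∏ j ∈ s, (1 - x / 2 ^ j) ^ K ∈ Set.Icc (0 : ℝ) 1 :=
  have hfac := one_sub_div_two_pow_mem_Icc hx0 hx1
  ⟨prod_nonneg fun j _ => pow_nonneg (hfac j).1 K,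
    prod_le_one (fun j _ => pow_nonneg (hfac j).1 K) fun j _ => pow_le_one₀ (hfac j).1 (hfac j).2⟩

lemma phaseTerm_le_mul_prod (hx0 : 0 ≤ x) (hx1 : x ≤ 1) (e l : ℕ) :
    phaseTerm e K L x l ≤ x / 2 ^ l * ∏ j ∈ Icc (l + 1) (L - 1), (1 - x / 2 ^ j) ^ K := by
  have hy := one_sub_div_two_pow_mem_Icc hx0 hx1 l
  refine mul_le_mul_of_nonneg_right (mul_le_of_le_one_right (by positivity) ?_)
    (prod_one_sub_div_two_pow_mem_Icc hx0 hx1 _).1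
  linarith [pow_nonneg hy.1 e]

lemma phaseTerm_le (hx0 : 0 ≤ x) (hx1 : x ≤ 1) (e l : ℕ) : phaseTerm e K L x l ≤ x / 2 ^ l :=
  (phaseTerm_le_mul_prod hx0 hx1 e l).trans
    (mul_le_of_le_one_right (by positivity) (prod_one_sub_div_two_pow_mem_Icc hx0 hx1 _).2)

lemma phaseTerm_le_exp (hx0 : 0 ≤ x) (hx1 : x ≤ 1) (e : ℕ) {l : ℕ} (hl : l + 1 ≤ L - 1) :
    phaseTerm e K L x l ≤ x / 2 ^ l * exp (-(K * (x / 2 ^ (l + 1)))) := by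
  have hy := one_sub_div_two_pow_mem_Icc hx0 hx1 (l + 1)
  have hmem : l + 1 ∈ Icc (l + 1) (L - 1) := mem_Icc.2 ⟨le_rfl, hl⟩
  refine (phaseTerm_le_mul_prod hx0 hx1 e l).trans (mul_le_mul_of_nonneg_left ?_ (by positivity))
  calc ∏ j ∈ Icc (l + 1) (L - 1), (1 - x / 2 ^ j) ^ K
      = (1 - x / 2 ^ (l + 1)) ^ K * ∏ j ∈ (Icc (l + 1) (L - 1)).erase (l + 1),
          (1 - x / 2 ^ j) ^ K := (mul_prod_erase _ _ hmem).symm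
    _ ≤ (1 - x / 2 ^ (l + 1)) ^ K :=
        mul_le_of_le_one_right (pow_nonneg hy.1 K) (prod_one_sub_div_two_pow_mem_Icc hx0 hx1 _).2
    _ ≤ exp (-(x / 2 ^ (l + 1))) ^ K := pow_le_pow_left₀ hy.1 (one_sub_le_exp_neg _) K
    _ = exp (-(K * (x / 2 ^ (l + 1)))) := by rw [← exp_nat_mul]; ring_nf

lemma phaseTerm_le_two_pow_mul_exp_neg (hx0 : 0 ≤ x) (hx1 : x ≤ 1) (e : ℕ) (hK : 0 < K)
    {l u : ℕ} (hlu : l < u) (huL : u < L) (h2u : (2 : ℝ) ^ u ≤ K * x) :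
    phaseTerm e K L x l ≤ 2 / K * (2 ^ (u - 1 - l) * exp (-2 ^ (u - 1 - l))) := by
  have hv : (2 : ℝ) ^ (u - 1 - l) ≤ K * (x / 2 ^ (l + 1)) := by
    have hpow : (2 : ℝ) ^ (u - 1 - l) * 2 ^ (l + 1) = 2 ^ u := by
      rw [← pow_add]; congr 1; omega
    rwa [← mul_div_assoc, le_div_iff₀ (by positivity), hpow]
  have hy : x / 2 ^ l = 2 / K * (K * (x / 2 ^ (l + 1))) := by
    field_simp; ring
  calc phaseTerm e K L x l ≤ x / 2 ^ l * exp (-(K * (x / 2 ^ (l + 1)))) :=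
        phaseTerm_le_exp hx0 hx1 e (by omega)
    _ = 2 / K * (K * (x / 2 ^ (l + 1)) * exp (-(K * (x / 2 ^ (l + 1))))) := by
        rw [hy, mul_assoc]
    _ ≤ 2 / K * (2 ^ (u - 1 - l) * exp (-2 ^ (u - 1 - l))) :=
        mul_le_mul_of_nonneg_left (mul_exp_neg_le_mul_exp_neg (one_le_pow₀ one_le_two) hv)
          (by positivity)

lemma sum_range_phaseTerm_le (hx0 : 0 ≤ x) (hx1 : x ≤ 1) (e : ℕ → ℕ) (hK : 0 < K)
    {u : ℕ} (huL : u < L) (hu : ∀ l < u, (2 : ℝ) ^ (l + 1) < K * x) :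
    ∑ l ∈ range u, phaseTerm (e l) K L x l ≤ 2 / K := by
  have hinj : Set.InjOn (fun l => 2 ^ (u - 1 - l)) (range u : Set ℕ) := by
    intro a ha b hb hab
    simp only [coe_range, Set.mem_Iio] at ha hb
    have := Nat.pow_right_injective le_rfl hab
    omega
  calc ∑ l ∈ range u, phaseTerm (e l) K L x l
      ≤ ∑ l ∈ range u, 2 / K * (2 ^ (u - 1 - l) * exp (-2 ^ (u - 1 - l))) := by
        refine sum_le_sum fun l hl => ?_
        rw [mem_range] at hl
        have h2u := hu (u - 1) (by omega)
        rw [Nat.sub_add_cancel (by omega)] at h2u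
        exact phaseTerm_le_two_pow_mul_exp_neg hx0 hx1 (e l) hK hl huL h2u.le
    _ = 2 / K * ∑ l ∈ range u,
          ((2 ^ (u - 1 - l) : ℕ) : ℝ) * exp (-((2 ^ (u - 1 - l) : ℕ) : ℝ)) := by
        push_cast; rw [mul_sum]
    _ ≤ 2 / K := mul_le_of_le_one_right (by positivity) (sum_natCast_mul_exp_neg_le_one _ _ hinj)

end phaseTerm

theorem stmt_5 (s K L : ℕ) (hK : 1 ≤ K) (hL : 1 ≤ L) (x : ℝ) (hx0 : 0 < x) (hx1 : x ≤ 1)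
    (hxL : x ≤ 2 ^ L / (K : ℝ)) :
    x * (1 - (1 - x) ^ (s + K)) * (∏ j ∈ Finset.Icc 1 (L - 1), (1 - x / 2 ^ j) ^ K)
      + ∑ l ∈ Finset.Icc 1 (L - 1),
          (x / 2 ^ l) * (1 - (1 - x / 2 ^ l) ^ K) *
            (∏ j ∈ Finset.Icc (l + 1) (L - 1), (1 - x / 2 ^ j) ^ K)
    ≤ 8 / (K : ℝ) := by
  have hKr : (0 : ℝ) < K := by exact_mod_cast hK
  obtain ⟨u, huL, hKxu, hu⟩ := exists_min_le_two_pow_succ (a := K * x) (n := L - 1)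
    (by rwa [Nat.sub_add_cancel hL, ← le_div_iff₀' hKr])
  rw [← sum_range_phaseTerm s hL, ← sum_range_add_sum_Ico _ (by omega : u ≤ L)]
  calc _ ≤ 2 / K + 2 * (x / 2 ^ u) := by
        gcongr
        · exact sum_range_phaseTerm_le hx0.le hx1 _ hK (by omega) hu
        · exact (sum_le_sum fun l _ => phaseTerm_le hx0.le hx1 _ l).trans
            (sum_Ico_div_two_pow_le hx0.le u L)
    _ ≤ 8 / K := by
        have : x / 2 ^ u ≤ 2 / K := by
          rw [pow_succ] at hKxu
          rw [div_le_div_iff₀ (by positivity) hKr]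
          linarith
        have h8 : 8 / (K : ℝ) = 4 * (2 / K) := by ring
        linarith [div_pos two_pos hKr]
end

section
/- Let s ≥ 0, K ≥ 10 be integers, L ≥ 1, and x ∈ (0, 1/(s+K)). Define f(x) = (x/2)(1-(1-2x)^{s+K})(1-2x)^K + ∑_{ℓ=1}^{L-1} (x/2^{ℓ+1})(1-(1-x/2^{ℓ-1})^K)(1-x/2^{ℓ-1})^K. Then f(x) ≥ (s+K)x²/40. -/
/-!
The sum over `l` is nonnegative, so only the first term matters. With `n = s + K` and `n x < 1`,
Bernoulli's inequality gives `(1 - 2x)^n ≤ (1 - x)^n ≤ 1 - n x / 2`, and since `K x < 1` and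
`(1 - 2/K)^K` increases with `K`, `(1 - 2x)^K ≥ (1 - 2/10)^10 ≥ 1/10`.
-/

lemma one_sub_pow_le_one_sub_mul_div_two {x : ℝ} {n : ℕ} (hx0 : 0 ≤ x) (hx1 : x ≤ 1)
    (hnx : n * x ≤ 1) : (1 - x) ^ n ≤ 1 - n * x / 2 := by
  have hbern : 1 + n * x ≤ (1 + x) ^ n := one_add_mul_le_pow (by linarith) n
  have hprod : (1 - x) ^ n * (1 + x) ^ n ≤ 1 := by
    rw [← mul_pow]
    exact pow_le_one₀ (by nlinarith) (by nlinarith)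
  have hpow : 0 ≤ (1 - x) ^ n := pow_nonneg (by linarith) n
  have hnx0 : 0 ≤ n * x := by positivity
  -- `1 / (1 + y) ≤ 1 - y / 2` for `0 ≤ y ≤ 1`
  have key : (1 - x) ^ n * (1 + n * x) ≤ (1 - n * x / 2) * (1 + n * x) := by
    nlinarith [mul_le_mul_of_nonneg_left hbern hpow, mul_nonneg hnx0 (sub_nonneg.2 hnx)]
  exact le_of_mul_le_mul_right key (by linarith)

lemma one_sub_div_pow_le_succ {a : ℝ} {n : ℕ} (han : a < n) :
    (1 - a / n) ^ n ≤ (1 - a / (n + 1)) ^ (n + 1) := by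
  rcases n.eq_zero_or_pos with rfl | hn
  · norm_num at han ⊢; linarith
  have hn : (0 : ℝ) < n := Nat.cast_pos.2 hn
  have hna : 0 < (n : ℝ) - a := by linarith
  set d := a / ((n + 1) * (n - a)) with hd
  have hb : 0 < 1 - a / n := by rw [sub_pos, div_lt_one hn]; exact han
  -- `1 - a / (n + 1) = (1 - a / n) * (1 + d)` and Bernoulli gives `(1 + d)^(n+1) ≥ 1 / (1 - a / n)`
  have hfactor : 1 - a / (n + 1) = (1 - a / n) * (1 + d) := by
    rw [hd]; field_simp; ring
  have hbern : 1 + (n + 1 : ℕ) * d ≤ (1 + d) ^ (n + 1) := one_add_mul_le_pow (by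
    rw [hd, le_div_iff₀ (by positivity)]; nlinarith) _
  have hinv : (1 - a / n) * (1 + (n + 1 : ℕ) * d) = 1 := by
    rw [hd]; push_cast; field_simp; ring
  calc (1 - a / n) ^ n = (1 - a / n) ^ (n + 1) * (1 + (n + 1 : ℕ) * d) := by
        rw [pow_succ, mul_assoc, hinv, mul_one]
    _ ≤ (1 - a / n) ^ (n + 1) * (1 + d) ^ (n + 1) := by gcongr
    _ = (1 - a / (n + 1)) ^ (n + 1) := by rw [hfactor, mul_pow]

lemma one_sub_div_pow_mono {a : ℝ} {m n : ℕ} (ham : a < m) (hmn : m ≤ n) :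
    (1 - a / m) ^ m ≤ (1 - a / n) ^ n := by
  induction n, hmn using Nat.le_induction with
  | base => rfl
  | succ n hmn ih =>
    have han : a < n := ham.trans_le (Nat.cast_le.2 hmn)
    simpa using ih.trans (one_sub_div_pow_le_succ han)

lemma inv_ten_le_one_sub_two_mul_pow {x : ℝ} {K : ℕ} (hK : 10 ≤ K) (hKx : K * x ≤ 1) :
    1 / 10 ≤ (1 - 2 * x) ^ K := by
  have hKpos : (0 : ℝ) < K := by positivity
  have hxK : 2 * x ≤ 2 / K := by rw [le_div_iff₀ hKpos]; linarith
  have h2K : 2 / (K : ℝ) ≤ 1 := by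
    rw [div_le_one hKpos]; exact_mod_cast (by omega : 2 ≤ K)
  calc (1 : ℝ) / 10 ≤ (1 - 2 / ((10 : ℕ) : ℝ)) ^ 10 := by norm_num
    _ ≤ (1 - 2 / K) ^ K := one_sub_div_pow_mono (by norm_num) hK
    _ ≤ (1 - 2 * x) ^ K := pow_le_pow_left₀ (by linarith) (by linarith) K

lemma mul_one_sub_pow_mul_pow_nonneg {a y : ℝ} (K : ℕ) (ha : 0 ≤ a) (hy0 : 0 ≤ y)
    (hy1 : y ≤ 1) : 0 ≤ a * (1 - (1 - y) ^ K) * (1 - y) ^ K := by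
  have hpow0 : 0 ≤ (1 - y) ^ K := pow_nonneg (by linarith) K
  have hpow1 : (1 - y) ^ K ≤ 1 := pow_le_one₀ (by linarith) (by linarith)
  exact mul_nonneg (mul_nonneg ha (by linarith)) hpow0

lemma mul_sq_div_forty_le {x : ℝ} {n K : ℕ} (hK : 10 ≤ K) (hKn : K ≤ n) (hx : 0 ≤ x)
    (hnx : n * x ≤ 1) :
    n * x ^ 2 / 40 ≤ (x / 2) * (1 - (1 - 2 * x) ^ n) * (1 - 2 * x) ^ K := by
  have hKx : K * x ≤ 1 := le_trans (by gcongr) hnx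
  have hx1 : x ≤ 1 / 10 := by
    have : (10 : ℝ) * x ≤ K * x := by gcongr; exact_mod_cast hK
    linarith
  have hhead : n * x / 2 ≤ 1 - (1 - 2 * x) ^ n := by
    have h1 : (1 - 2 * x) ^ n ≤ (1 - x) ^ n := pow_le_pow_left₀ (by linarith) (by linarith) n
    have h2 := one_sub_pow_le_one_sub_mul_div_two hx (by linarith) hnx
    linarith
  have hhead0 : 0 ≤ 1 - (1 - 2 * x) ^ n := le_trans (by positivity) hhead
  have htail := inv_ten_le_one_sub_two_mul_pow hK hKx
  calc (n : ℝ) * x ^ 2 / 40 = (x / 2) * (n * x / 2) * (1 / 10) := by ring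
    _ ≤ (x / 2) * (1 - (1 - 2 * x) ^ n) * (1 - 2 * x) ^ K := by gcongr

theorem stmt_7_general (s K L : ℕ) (hK : 10 ≤ K) (x : ℝ) (hx0 : 0 < x)
    (hx1 : x < 1 / ((s : ℝ) + K)) :
    ((s : ℝ) + K) * x ^ 2 / 40 ≤
      (x / 2) * (1 - (1 - 2 * x) ^ (s + K)) * (1 - 2 * x) ^ K
        + ∑ l ∈ Finset.Icc 1 (L - 1),
            (x / 2 ^ (l + 1)) * (1 - (1 - x / 2 ^ (l - 1)) ^ K) * (1 - x / 2 ^ (l - 1)) ^ K := by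
  have hnpos : (0 : ℝ) < s + K := by positivity
  have hnx : ((s + K : ℕ) : ℝ) * x ≤ 1 := by
    push_cast; rw [lt_div_iff₀ hnpos] at hx1; linarith
  have hx_le_one : x ≤ 1 :=
    hx1.le.trans (div_le_one_of_le₀ (by exact_mod_cast (by omega : 1 ≤ s + K)) hnpos.le)
  have hhead := mul_sq_div_forty_le hK (Nat.le_add_left K s) hx0.le hnx
  have hsum : 0 ≤ ∑ l ∈ Finset.Icc 1 (L - 1),
      (x / 2 ^ (l + 1)) * (1 - (1 - x / 2 ^ (l - 1)) ^ K) * (1 - x / 2 ^ (l - 1)) ^ K :=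
    Finset.sum_nonneg fun l _ => mul_one_sub_pow_mul_pow_nonneg K (by positivity) (by positivity)
      ((div_le_self hx0.le (one_le_pow₀ one_le_two)).trans hx_le_one)
  push_cast at hhead
  linarith

theorem stmt_7 (s K L : ℕ) (hK : 10 ≤ K) (hL : 1 ≤ L) (x : ℝ) (hx0 : 0 < x)
    (hx1 : x < 1 / ((s : ℝ) + K)) :
    ((s : ℝ) + K) * x ^ 2 / 40 ≤
      (x / 2) * (1 - (1 - 2 * x) ^ (s + K)) * (1 - 2 * x) ^ K
        + ∑ l ∈ Finset.Icc 1 (L - 1),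
            (x / 2 ^ (l + 1)) * (1 - (1 - x / 2 ^ (l - 1)) ^ K) * (1 - x / 2 ^ (l - 1)) ^ K :=
  stmt_7_general s K L hK x hx0 hx1
end

section
/- Let s ≥ 0, K ≥ 10 be integers, L ≥ 1, and x ∈ [1/(s+K), 1/K). Define f(x) = (x/2)(1-(1-2x)^{s+K})(1-2x)^K + ∑_{ℓ=1}^{L-1} (x/2^{ℓ+1})(1-(1-x/2^{ℓ-1})^K)(1-x/2^{ℓ-1})^K. Then f(x) ≥ x/40. -/
/-!
With `t = 2x`, the hypotheses say `(s + K) t ≥ 2` and `K t < 2 ≤ K / 5`. The first gives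
`(1 - t) ^ (s + K) ≤ e⁻² ≤ 1/2`; the second, through `log (1 - t) ≥ -t (2 - t) / (2 (1 - t))`,
gives `(1 - t) ^ K ≥ e^(-9/4) > 1/10`. So the leading term is at least `(x/2)(1/2)(1/10)`,
and every term of the sum is nonnegative.
-/

open Real

lemma exp_neg_le_one_sub {t : ℝ} (h0 : 0 ≤ t) (h1 : t < 1) :
    exp (-(t * (2 - t) / (2 * (1 - t)))) ≤ 1 - t := by
  set c : ℝ := t * (2 - t) / (2 * (1 - t)) with hc
  have ht : 0 < 1 - t := by linarith
  have hc0 : 0 ≤ c := div_nonneg (by nlinarith) (by linarith)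
  have hquad : 1 / (1 - t) ≤ 1 + c + c ^ 2 / 2 := by
    have hdiff : 1 + c + c ^ 2 / 2 - 1 / (1 - t) = t ^ 4 / (8 * (1 - t) ^ 2) := by
      rw [hc]; field_simp; ring
    have : 0 ≤ t ^ 4 / (8 * (1 - t) ^ 2) := by positivity
    linarith
  have hexp : 1 / (1 - t) ≤ exp c := hquad.trans (quadratic_le_exp_of_nonneg hc0)
  rw [exp_neg, inv_le_iff_one_le_mul₀ (exp_pos c)]
  rw [div_le_iff₀ ht] at hexp
  linarith

lemma exp_nine_div_four_lt_ten : exp (9 / 4) < 10 := by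
  have hpow : exp (9 / 4) ^ 4 = exp 1 ^ 9 := by
    rw [← exp_nat_mul, ← exp_nat_mul]; norm_num
  have hlt : exp (9 / 4) ^ 4 < 10 ^ 4 :=
    calc exp (9 / 4) ^ 4 = exp 1 ^ 9 := hpow
      _ < 2.7182818286 ^ 9 := pow_lt_pow_left₀ exp_one_lt_d9 (exp_pos 1).le (by norm_num)
      _ < 10 ^ 4 := by norm_num
  exact lt_of_pow_lt_pow_left₀ 4 (by norm_num) hlt

lemma one_sub_pow_le_exp_neg_mul {t : ℝ} (ht : t ≤ 1) (n : ℕ) :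
    (1 - t) ^ n ≤ exp (-(n * t)) :=
  calc (1 - t) ^ n ≤ exp (-t) ^ n :=
        pow_le_pow_left₀ (by linarith) (one_sub_le_exp_neg t) n
    _ = exp (-(n * t)) := by rw [← exp_nat_mul]; ring_nf

lemma one_sub_pow_le_half {t : ℝ} {n : ℕ} (ht : t ≤ 1) (hnt : 2 ≤ n * t) :
    (1 - t) ^ n ≤ 1 / 2 := by
  have h3 : 3 ≤ exp 2 := by linarith [add_one_le_exp 2]
  calc (1 - t) ^ n ≤ exp (-(n * t)) := one_sub_pow_le_exp_neg_mul ht n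
    _ ≤ exp (-2) := exp_le_exp.mpr (by linarith)
    _ = (exp 2)⁻¹ := exp_neg 2
    _ ≤ 1 / 2 := by rw [one_div]; exact inv_anti₀ (by norm_num) (by linarith)

lemma one_div_ten_le_one_sub_pow {t : ℝ} {n : ℕ} (h0 : 0 ≤ t) (h1 : t ≤ 1 / 5)
    (hnt : n * t ≤ 2) : 1 / 10 ≤ (1 - t) ^ n := by
  set c : ℝ := t * (2 - t) / (2 * (1 - t))
  have hc : n * c ≤ 9 / 4 := by
    have : n * c = (n * t) * (2 - t) / (2 * (1 - t)) := by ring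
    rw [this, div_le_iff₀ (by linarith)]
    nlinarith
  calc (1 : ℝ) / 10 ≤ (exp (9 / 4))⁻¹ := by
        rw [one_div]; exact inv_anti₀ (exp_pos _) exp_nine_div_four_lt_ten.le
    _ = exp (-(9 / 4)) := (exp_neg _).symm
    _ ≤ exp (-c) ^ n := by rw [← exp_nat_mul]; exact exp_le_exp.mpr (by linarith)
    _ ≤ (1 - t) ^ n := pow_le_pow_left₀ (exp_pos _).le (exp_neg_le_one_sub h0 (by linarith)) n

lemma mul_one_sub_pow_mul_pow_nonneg_s8 {a b : ℝ} (ha : 0 ≤ a) (hb0 : 0 ≤ b) (hb1 : b ≤ 1)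
    (n : ℕ) : 0 ≤ a * (1 - b ^ n) * b ^ n :=
  mul_nonneg (mul_nonneg ha (sub_nonneg.mpr (pow_le_one₀ hb0 hb1))) (pow_nonneg hb0 n)

theorem stmt_8_general (s K L : ℕ) (hK : 10 ≤ K) (x : ℝ)
    (hx0 : 1 / ((s : ℝ) + K) ≤ x) (hx1 : x < 1 / (K : ℝ)) :
    x / 40 ≤
      (x / 2) * (1 - (1 - 2 * x) ^ (s + K)) * (1 - 2 * x) ^ K
        + ∑ l ∈ Finset.Icc 1 (L - 1),
            (x / 2 ^ (l + 1)) * (1 - (1 - x / 2 ^ (l - 1)) ^ K) * (1 - x / 2 ^ (l - 1)) ^ K := by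
  have hK10 : (10 : ℝ) ≤ K := by exact_mod_cast hK
  have hsK : (0 : ℝ) < s + K := by positivity
  have hx : 0 < x := lt_of_lt_of_le (by positivity) hx0
  have hKx : K * x < 1 := by rwa [lt_div_iff₀ (by positivity), mul_comm] at hx1
  have hsKx : 1 ≤ (s + K) * x := by rwa [div_le_iff₀ hsK, mul_comm] at hx0
  have hx10 : x < 1 / 10 := by nlinarith
  have hhalf : (1 - 2 * x) ^ (s + K) ≤ 1 / 2 :=
    one_sub_pow_le_half (by linarith) (by push_cast; linarith)
  have htenth : 1 / 10 ≤ (1 - 2 * x) ^ K :=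
    one_div_ten_le_one_sub_pow (by linarith) (by linarith) (by linarith)
  have hlead : x / 40 ≤ (x / 2) * (1 - (1 - 2 * x) ^ (s + K)) * (1 - 2 * x) ^ K :=
    calc x / 40 = x / 2 * (1 / 2) * (1 / 10) := by ring
      _ ≤ x / 2 * (1 - (1 - 2 * x) ^ (s + K)) * (1 / 10) := by gcongr; linarith
      _ ≤ _ := by gcongr; nlinarith
  have hsum : 0 ≤ ∑ l ∈ Finset.Icc 1 (L - 1),
      (x / 2 ^ (l + 1)) * (1 - (1 - x / 2 ^ (l - 1)) ^ K) * (1 - x / 2 ^ (l - 1)) ^ K := by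
    refine Finset.sum_nonneg fun l _ => mul_one_sub_pow_mul_pow_nonneg_s8 (by positivity) ?_ ?_ K
    · have : x / 2 ^ (l - 1) ≤ x := div_le_self hx.le (one_le_pow₀ (by norm_num))
      linarith
    · have : 0 ≤ x / 2 ^ (l - 1) := by positivity
      linarith
  linarith

theorem stmt_8 (s K L : ℕ) (hK : 10 ≤ K) (hL : 1 ≤ L) (x : ℝ)
    (hx0 : 1 / ((s : ℝ) + K) ≤ x) (hx1 : x < 1 / (K : ℝ)) :
    x / 40 ≤
      (x / 2) * (1 - (1 - 2 * x) ^ (s + K)) * (1 - 2 * x) ^ K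
        + ∑ l ∈ Finset.Icc 1 (L - 1),
            (x / 2 ^ (l + 1)) * (1 - (1 - x / 2 ^ (l - 1)) ^ K) * (1 - x / 2 ^ (l - 1)) ^ K :=
  stmt_8_general s K L hK x hx0 hx1
end

section
/- For any vector x in a finite-dimensional inner product space whose whitened version z = H^{-1/2}x (H = E[xxᵀ] ≻ 0) satisfies the bounded kurtosis condition E[⟨v,x⟩⁴] ≤ α⟨v,Hv⟩² for all v, it holds that E[xxᵀAxxᵀ] ⪯ α·tr(HA)·H for every PSD matrix A. -/
open Matrix MeasureTheory

/-! Write the positive semidefinite `A` as `Bᵀ B`, so that `⟨x, A x⟩ = ∑ᵢ ⟨x, bᵢ⟩²` and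
`tr (H A) = ∑ᵢ ⟨bᵢ, H bᵢ⟩` for the rows `bᵢ` of `B`. By Cauchy–Schwarz and the kurtosis bound,
`E[⟨x, bᵢ⟩² ⟨x, u⟩²] ≤ √(E⟨x, bᵢ⟩⁴ · E⟨x, u⟩⁴) ≤ α ⟨bᵢ, H bᵢ⟩ ⟨u, H u⟩`; sum over `i`. -/

open scoped MatrixOrder ComplexOrder in
theorem Matrix.PosSemidef.exists_eq_conjTranspose_mul_self {𝕜 n : Type*} [RCLike 𝕜] [Fintype n]
    [DecidableEq n] {A : Matrix n n 𝕜} (hA : A.PosSemidef) : ∃ B : Matrix n n 𝕜, A = Bᴴ * B :=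
  ⟨CFC.sqrt A, by
    rw [(CFC.sqrt_nonneg A).posSemidef.1, CFC.sqrt_mul_sqrt_self A hA.nonneg]⟩

theorem Matrix.dotProduct_transpose_mul_self_mulVec {R m n : Type*} [CommSemiring R] [Fintype m]
    [Fintype n] (B : Matrix m n R) (y : n → R) :
    y ⬝ᵥ (Bᵀ * B) *ᵥ y = ∑ i, (y ⬝ᵥ B i) ^ 2 := by
  rw [← mulVec_mulVec, dotProduct_mulVec, vecMul_transpose]
  simp only [dotProduct, mulVec, sq, mul_comm (y _)]

theorem Matrix.trace_mul_transpose_mul_self {R m n : Type*} [CommSemiring R] [Fintype m]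
    [Fintype n] (H : Matrix n n R) (B : Matrix m n R) :
    (H * (Bᵀ * B)).trace = ∑ i, B i ⬝ᵥ H *ᵥ B i := by
  rw [← Matrix.mul_assoc, trace_mul_comm, ← Matrix.mul_assoc]
  simp only [trace, diag, mul_apply, transpose_apply, dotProduct, mulVec, Finset.sum_mul,
    Finset.mul_sum]
  refine Finset.sum_congr rfl fun i _ => ?_
  rw [Finset.sum_comm]
  exact Finset.sum_congr rfl fun j _ => Finset.sum_congr rfl fun k _ => by ring

section Integral

variable {Ω : Type*} [MeasurableSpace Ω] {μ : Measure Ω}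

theorem sq_integral_mul_le_integral_sq_mul_integral_sq {f g : Ω → ℝ}
    (hf : Integrable (fun ω => f ω ^ 2) μ) (hg : Integrable (fun ω => g ω ^ 2) μ)
    (hfg : Integrable (fun ω => f ω * g ω) μ) :
    (∫ ω, f ω * g ω ∂μ) ^ 2 ≤ (∫ ω, f ω ^ 2 ∂μ) * ∫ ω, g ω ^ 2 ∂μ := by
  have hquad : ∀ t : ℝ,
      0 ≤ (∫ ω, f ω ^ 2 ∂μ) * (t * t) + (2 * ∫ ω, f ω * g ω ∂μ) * t + ∫ ω, g ω ^ 2 ∂μ := by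
    intro t
    have hexpand : ∫ ω, (t * f ω + g ω) ^ 2 ∂μ =
        ∫ ω, t ^ 2 * f ω ^ 2 + 2 * t * (f ω * g ω) + g ω ^ 2 ∂μ := by
      congr with ω; ring
    rw [integral_add ?_ hg,
      integral_add (hf.const_mul _) (hfg.const_mul _), integral_const_mul,
      integral_const_mul] at hexpand
    · have hsq : 0 ≤ ∫ ω, (t * f ω + g ω) ^ 2 ∂μ := integral_nonneg fun ω => sq_nonneg _
      nlinarith
    · exact (hf.const_mul _).add (hfg.const_mul _)
  have hdiscrim := discrim_le_zero hquad
  rw [discrim] at hdiscrim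
  linarith

theorem integral_sq_mul_sq_le_of_integral_pow_four_le {f g : Ω → ℝ} {α p q : ℝ}
    (hf : Integrable (fun ω => f ω ^ 4) μ) (hg : Integrable (fun ω => g ω ^ 4) μ)
    (hfg : Integrable (fun ω => f ω ^ 2 * g ω ^ 2) μ) (hp : 0 ≤ p) (hq : 0 ≤ q)
    (hfp : ∫ ω, f ω ^ 4 ∂μ ≤ α * p ^ 2) (hgq : ∫ ω, g ω ^ 4 ∂μ ≤ α * q ^ 2) :
    ∫ ω, f ω ^ 2 * g ω ^ 2 ∂μ ≤ α * p * q := by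
  have hsq_sq : ∀ h : Ω → ℝ, (fun ω => (h ω ^ 2) ^ 2) = fun ω => h ω ^ 4 :=
    fun h => funext fun ω => by ring
  have hcs := sq_integral_mul_le_integral_sq_mul_integral_sq
    (by rwa [hsq_sq]) (by rwa [hsq_sq]) hfg
  rw [hsq_sq, hsq_sq] at hcs
  have hf4 : 0 ≤ ∫ ω, f ω ^ 4 ∂μ := integral_nonneg fun ω => by positivity
  have hg4 : 0 ≤ ∫ ω, g ω ^ 4 ∂μ := integral_nonneg fun ω => by positivity
  have hαpq : 0 ≤ α * p * q := by
    rcases hp.eq_or_lt with rfl | hp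
    · simp
    have hα : 0 ≤ α := (mul_nonneg_iff_of_pos_right (by positivity)).mp (hf4.trans hfp)
    positivity
  refine le_of_pow_le_pow_left₀ two_ne_zero hαpq ?_
  calc (∫ ω, f ω ^ 2 * g ω ^ 2 ∂μ) ^ 2 ≤ (∫ ω, f ω ^ 4 ∂μ) * ∫ ω, g ω ^ 4 ∂μ := hcs
    _ ≤ (α * p ^ 2) * (α * q ^ 2) := mul_le_mul hfp hgq hg4 (hf4.trans hfp)
    _ = (α * p * q) ^ 2 := by ring

end Integral

theorem stmt_13_general {Ω : Type*} [MeasurableSpace Ω] (μ : Measure Ω)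
    {d : ℕ} (x : Ω → Fin d → ℝ) (H : Matrix (Fin d) (Fin d) ℝ) (α : ℝ)
    (hHpd : H.PosDef)
    (hint : ∀ u w : Fin d → ℝ,
      Integrable (fun ω => (x ω ⬝ᵥ u) ^ 2 * (x ω ⬝ᵥ w) ^ 2) μ)
    (hkurt : ∀ u : Fin d → ℝ, ∫ ω, (x ω ⬝ᵥ u) ^ 4 ∂μ ≤ α * (u ⬝ᵥ H.mulVec u) ^ 2)
    (A : Matrix (Fin d) (Fin d) ℝ) (hA : A.PosSemidef) (u : Fin d → ℝ) :
    ∫ ω, (x ω ⬝ᵥ A.mulVec (x ω)) * (x ω ⬝ᵥ u) ^ 2 ∂μ ≤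
      α * (H * A).trace * (u ⬝ᵥ H.mulVec u) := by
  obtain ⟨B, rfl⟩ := hA.exists_eq_conjTranspose_mul_self
  rw [conjTranspose_eq_transpose_of_trivial]
  have hH_nonneg (v : Fin d → ℝ) : 0 ≤ v ⬝ᵥ H *ᵥ v := by
    simpa using hHpd.posSemidef.dotProduct_mulVec_nonneg v
  have hfourth (v : Fin d → ℝ) : Integrable (fun ω => (x ω ⬝ᵥ v) ^ 4) μ := by
    simpa only [← pow_add] using hint v v
  calc ∫ ω, (x ω ⬝ᵥ (Bᵀ * B) *ᵥ x ω) * (x ω ⬝ᵥ u) ^ 2 ∂μ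
      = ∑ i, ∫ ω, (x ω ⬝ᵥ B i) ^ 2 * (x ω ⬝ᵥ u) ^ 2 ∂μ := by
        simp_rw [dotProduct_transpose_mul_self_mulVec, Finset.sum_mul]
        exact integral_finsetSum _ fun i _ => hint (B i) u
    _ ≤ ∑ i, α * (B i ⬝ᵥ H *ᵥ B i) * (u ⬝ᵥ H *ᵥ u) := Finset.sum_le_sum fun i _ =>
        integral_sq_mul_sq_le_of_integral_pow_four_le (hfourth _) (hfourth u) (hint _ u)
          (hH_nonneg _) (hH_nonneg u) (hkurt _) (hkurt u)
    _ = α * (H * (Bᵀ * B)).trace * (u ⬝ᵥ H *ᵥ u) := by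
        rw [trace_mul_transpose_mul_self, Finset.mul_sum, Finset.sum_mul]

theorem stmt_13 {Ω : Type*} [MeasurableSpace Ω] (μ : Measure Ω) [IsProbabilityMeasure μ]
    {d : ℕ} (x : Ω → Fin d → ℝ) (H : Matrix (Fin d) (Fin d) ℝ) (α : ℝ)
    (hHpd : H.PosDef)
    (hH : ∀ u w : Fin d → ℝ, ∫ ω, (x ω ⬝ᵥ u) * (x ω ⬝ᵥ w) ∂μ = u ⬝ᵥ H.mulVec w)
    (hint : ∀ u w : Fin d → ℝ,
      Integrable (fun ω => (x ω ⬝ᵥ u) ^ 2 * (x ω ⬝ᵥ w) ^ 2) μ)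
    (hkurt : ∀ u : Fin d → ℝ, ∫ ω, (x ω ⬝ᵥ u) ^ 4 ∂μ ≤ α * (u ⬝ᵥ H.mulVec u) ^ 2)
    (A : Matrix (Fin d) (Fin d) ℝ) (hA : A.PosSemidef) (u : Fin d → ℝ) :
    ∫ ω, (x ω ⬝ᵥ A.mulVec (x ω)) * (x ω ⬝ᵥ u) ^ 2 ∂μ ≤
      α * (H * A).trace * (u ⬝ᵥ H.mulVec u) :=
  stmt_13_general μ x H α hHpd hint hkurt A hA u
end
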